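/- Let φ(z) = 1 + z. There are no T_φ-inner functions: if f ∈ H² satisfies ∫_𝕋 (1+ξ)^n |f(ξ)|² dm(ξ) = 0 for all integers n ≥ 1, then f = 0. -/

import Mathlib

/-!
The measure `|f|² dm` lives on the closed unit disk and has no atom at `-1`. Writing
`(1 - z) / 2 = 1 - (1 + z) / 2` and expanding binomially, the hypothesis gives
`∫ ((1 - z) / 2) ^ n |f|² dm = ∫ |f|² dm` for every `n`. Off `z = -1` we have
`|(1 - z) / 2| < 1`, so by dominated convergence the left side tends to `0`; hence `f = 0` a.e.
-/

open MeasureTheory Complex Filter Metric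
open Topology

/-- Normalized Lebesgue (arclength) measure on the unit circle `𝕋 ⊆ ℂ`. -/
noncomputable def mCirc : Measure ℂ :=
  Measure.map (fun θ : ℝ => Complex.exp (θ * Complex.I))
    ((ENNReal.ofReal (2 * Real.pi))⁻¹ • volume.restrict (Set.Ioc 0 (2 * Real.pi)))

/-- `f` is (the boundary function of) a function in the Hardy space `H²`:
it is square integrable on `𝕋` and its negative Fourier coefficients vanish. -/
def MemH2 (f : ℂ → ℂ) : Prop :=
  MemLp f 2 mCirc ∧ ∀ n : ℕ, 1 ≤ n → ∫ z, f z * z ^ n ∂mCirc = 0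

/-- `u` is (the boundary function of) an inner function: it is unimodular a.e. on `𝕋`
and its negative Fourier coefficients vanish. -/
def InnerBdry (u : ℂ → ℂ) : Prop :=
  (∀ᵐ z ∂mCirc, ‖u z‖ = 1) ∧ ∀ n : ℕ, 1 ≤ n → ∫ z, u z * z ^ n ∂mCirc = 0

/-- `φ` is (the boundary function of) a function in `H^∞`. -/
def HinfBdry (φ : ℂ → ℂ) : Prop :=
  MemLp φ ⊤ mCirc ∧ ∀ n : ℕ, 1 ≤ n → ∫ z, φ z * z ^ n ∂mCirc = 0

/-- `f` is a `T_φ`-inner vector: a unit vector with `⟨φ^n f, f⟩ = 0` for all `n ≥ 1`. -/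
def TInner (φ f : ℂ → ℂ) : Prop :=
  (∫ z, ‖f z‖ ^ 2 ∂mCirc) = 1 ∧
  ∀ n : ℕ, 1 ≤ n → ∫ z, (φ z) ^ n * (f z * (starRingEnd ℂ) (f z)) ∂mCirc = 0

/-- `f` belongs to the model space `K_u = H² ⊖ u H²`. -/
def InKu (u f : ℂ → ℂ) : Prop :=
  MemH2 f ∧ ∀ n : ℕ, ∫ z, f z * (starRingEnd ℂ) (u z * z ^ n) ∂mCirc = 0

theorem countable_preimage_exp_mul_I (w : ℂ) :
    ((fun θ : ℝ => exp (θ * I)) ⁻¹' {w}).Countable := by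
  rcases Set.eq_empty_or_nonempty ((fun θ : ℝ => exp (θ * I)) ⁻¹' {w}) with h | ⟨θ₀, hθ₀⟩
  · simp [h]
  refine (Set.countable_range fun n : ℤ => θ₀ + n * (2 * Real.pi)).mono fun θ hθ => ?_
  obtain ⟨n, hn⟩ := exp_eq_exp_iff_exists_int.1 (hθ.trans hθ₀.symm)
  exact ⟨n, by simpa using (congrArg im hn).symm⟩

theorem measurable_exp_ofReal_mul_I : Measurable fun θ : ℝ => exp (θ * I) := by fun_prop

instance : NullSingletonClass mCirc where
  measure_singleton w := by
    rw [mCirc, Measure.map_apply measurable_exp_ofReal_mul_I (measurableSet_singleton w),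
      Measure.smul_apply, (countable_preimage_exp_mul_I w).measure_zero, smul_zero]

theorem mCirc_ae_norm_eq_one : ∀ᵐ z ∂mCirc, ‖z‖ = 1 := by
  rw [mCirc, ae_map_iff measurable_exp_ofReal_mul_I.aemeasurable
    (isClosed_eq continuous_norm continuous_const).measurableSet]
  exact ae_of_all _ fun θ => norm_exp_ofReal_mul_I θ

theorem norm_one_add_le_two {z : ℂ} (hz : ‖z‖ ≤ 1) : ‖1 + z‖ ≤ 2 :=
  (norm_add_le _ _).trans (by simp; linarith)

theorem norm_one_sub_div_two_le_one {z : ℂ} (hz : ‖z‖ ≤ 1) : ‖(1 - z) / 2‖ ≤ 1 := by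
  rw [norm_div, div_le_one (by norm_num), Complex.norm_two]
  exact (norm_sub_le _ _).trans (by simp; linarith)

theorem norm_one_sub_div_two_lt_one {z : ℂ} (hz : ‖z‖ ≤ 1) (hz₁ : z ≠ -1) :
    ‖(1 - z) / 2‖ < 1 := by
  have hpos : 0 < ‖1 + z‖ := norm_pos_iff.2 fun h => hz₁ (by linear_combination h)
  have hpar := parallelogram_law_with_norm ℝ (1 : ℂ) z
  rw [norm_div, div_lt_one (by norm_num), Complex.norm_two]
  rw [norm_one] at hpar
  nlinarith [norm_nonneg z, norm_nonneg (1 - z)]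

section ClosedUnitDisk

variable {μ : Measure ℂ} {g : ℂ → ℂ}

theorem integrable_one_add_pow_mul (hμ : ∀ᵐ z ∂μ, ‖z‖ ≤ 1) (hg : Integrable g μ) (k : ℕ) :
    Integrable (fun z => (1 + z) ^ k * g z) μ := by
  refine hg.bdd_mul (c := 2 ^ k) (by fun_prop) ?_
  filter_upwards [hμ] with z hz
  rw [norm_pow]
  exact pow_le_pow_left₀ (norm_nonneg _) (norm_one_add_le_two hz) k

theorem integral_one_sub_div_two_pow_mul (hμ : ∀ᵐ z ∂μ, ‖z‖ ≤ 1) (hg : Integrable g μ)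
    (h : ∀ n : ℕ, 1 ≤ n → ∫ z, (1 + z) ^ n * g z ∂μ = 0) (n : ℕ) :
    ∫ z, ((1 - z) / 2) ^ n * g z ∂μ = ∫ z, g z ∂μ := by
  have expand : ∀ z : ℂ, ((1 - z) / 2) ^ n * g z
      = ∑ k ∈ Finset.range (n + 1), (n.choose k * (-2⁻¹ : ℂ) ^ k) * ((1 + z) ^ k * g z) := by
    intro z
    rw [show (1 - z) / 2 = -2⁻¹ * (1 + z) + 1 by ring, add_pow, Finset.sum_mul]
    refine Finset.sum_congr rfl fun k _ => ?_
    rw [mul_pow, one_pow]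
    ring
  simp_rw [expand]
  rw [integral_finsetSum _ fun k _ => (integrable_one_add_pow_mul hμ hg k).const_mul _,
    Finset.sum_eq_single_of_mem 0 (by simp) fun k _ hk => ?_]
  · simp
  · rw [integral_const_mul, h k (Nat.one_le_iff_ne_zero.2 hk), mul_zero]

theorem tendsto_integral_one_sub_div_two_pow_mul (hμ : ∀ᵐ z ∂μ, ‖z‖ ≤ 1) (hμ₁ : μ {-1} = 0)
    (hg : Integrable g μ) :
    Tendsto (fun n : ℕ => ∫ z, ((1 - z) / 2) ^ n * g z ∂μ) atTop (𝓝 0) := by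
  have hne : ∀ᵐ z ∂μ, z ≠ -1 := measure_eq_zero_iff_ae_notMem.1 hμ₁
  have bound (n : ℕ) : ∀ᵐ z ∂μ, ‖((1 - z) / 2) ^ n * g z‖ ≤ ‖g z‖ := by
    filter_upwards [hμ] with z hz
    rw [norm_mul, norm_pow]
    exact mul_le_of_le_one_left (norm_nonneg _)
      (pow_le_one₀ (norm_nonneg _) (norm_one_sub_div_two_le_one hz))
  have pointwise : ∀ᵐ z ∂μ, Tendsto (fun n : ℕ => ((1 - z) / 2) ^ n * g z) atTop (𝓝 0) := by
    filter_upwards [hμ, hne] with z hz hz₁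
    simpa using (tendsto_pow_atTop_nhds_zero_of_norm_lt_one
      (norm_one_sub_div_two_lt_one hz hz₁)).mul_const (g z)
  have hmeas (n : ℕ) : AEStronglyMeasurable (fun z => ((1 - z) / 2) ^ n * g z) μ :=
    (Continuous.aestronglyMeasurable (by fun_prop)).mul hg.aestronglyMeasurable
  simpa only [integral_zero] using
    tendsto_integral_of_dominated_convergence _ hmeas hg.norm bound pointwise

theorem integral_eq_zero_of_integral_one_add_pow_mul_eq_zero (hμ : ∀ᵐ z ∂μ, ‖z‖ ≤ 1)
    (hμ₁ : μ {-1} = 0) (hg : Integrable g μ)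
    (h : ∀ n : ℕ, 1 ≤ n → ∫ z, (1 + z) ^ n * g z ∂μ = 0) :
    ∫ z, g z ∂μ = 0 := by
  refine tendsto_nhds_unique ?_ (tendsto_integral_one_sub_div_two_pow_mul hμ hμ₁ hg)
  simpa only [integral_one_sub_div_two_pow_mul hμ hg h] using tendsto_const_nhds

end ClosedUnitDisk

/-- for `φ(z) = 1 + z` there are no `T_φ`-inner functions:
if `f ∈ H²` and `∫_𝕋 (1+ξ)^n |f(ξ)|² dm(ξ) = 0` for all `n ≥ 1`, then `f = 0` a.e. -/
theorem statement5 (f : ℂ → ℂ) (hf : MemH2 f)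
    (h : ∀ n : ℕ, 1 ≤ n →
      ∫ z, (1 + z) ^ n * (f z * (starRingEnd ℂ) (f z)) ∂mCirc = 0) :
    ∀ᵐ z ∂mCirc, f z = 0 := by
  have hsq : Integrable (fun z => ‖f z‖ ^ 2) mCirc := hf.1.integrable_norm_pow two_ne_zero
  have hconj : ∀ z, f z * (starRingEnd ℂ) (f z) = ((‖f z‖ ^ 2 : ℝ) : ℂ) :=
    fun z => by rw [mul_conj', ofReal_pow]
  simp_rw [hconj] at h
  have hzero : ∫ z, ‖f z‖ ^ 2 ∂mCirc = 0 := by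
    have := integral_eq_zero_of_integral_one_add_pow_mul_eq_zero
      (mCirc_ae_norm_eq_one.mono fun z hz => hz.le) (measure_singleton _) hsq.ofReal h
    rw [integral_ofReal] at this
    exact RCLike.ofReal_eq_zero.1 this
  filter_upwards [(integral_eq_zero_iff_of_nonneg (fun z => by positivity) hsq).1 hzero] with z hz
  simpa using hz
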